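/- If every message in history as with a non-empty nonce intersection back to an earlier message is returned to its apparent originator (no-leaks), and sender α sends nonce n only in messages addressed to β, and β satisfies no-leaks in its restricted history, then any later message in uHist(as, β) whose content contains n is addressed to α. -/

import Mathlib

abbrev Uid := ℕ
abbrev Nonce := ℕ
abbrev Item := Nonce ⊕ Uid

inductive Act : Type
  | msg (rec sender : Uid) (content : List Item)
  | invent (user : Uid) (what : Nonce)

def involves (u : Uid) : Act → Bool
  | .msg r s _ => r = u || s = u
  | .invent v _ => v = u

def uHist (as : List Act) (u : Uid) : List Act :=
  as.filter (involves u)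

def noLeaks (as : List Act) : Prop :=
  ∀ (i j : ℕ) α β γ vli vlj, i < j →
    as[i]? = some (Act.msg β α vli) → as[j]? = some (Act.msg γ β vlj) →
    (∃ n : Nonce, Sum.inl n ∈ vli ∧ Sum.inl n ∈ vlj) → γ = α

/-! Filtering keeps the relative order of the retained actions, so the earlier message from `α`
to `β` and the later message from `β` still form an ordered pair in `uHist as β`, where no-leaks
applies to their common nonce `n`. -/

open scoped List

theorem List.pair_sublist_iff_getElem? {α : Type*} {a b : α} {l : List α} :
    [a, b] <+ l ↔ ∃ i j : ℕ, i < j ∧ l[i]? = some a ∧ l[j]? = some b := by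
  constructor
  · intro h
    obtain ⟨is, his, hlt⟩ := List.sublist_eq_map_getElem h
    rcases is with _ | ⟨i, _ | ⟨j, _ | _⟩⟩ <;> simp at his
    obtain ⟨rfl, rfl⟩ := his
    exact ⟨i, j, by simpa using hlt, by simp, by simp⟩
  · rintro ⟨i, j, hij, hai, hbj⟩
    obtain ⟨hi, rfl⟩ := List.getElem?_eq_some_iff.1 hai
    obtain ⟨hj, rfl⟩ := List.getElem?_eq_some_iff.1 hbj
    simpa using List.map_getElem_sublist (is := [⟨i, hi⟩, ⟨j, hj⟩]) (by simpa using hij)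

theorem noLeaks.eq_of_pair_sublist {as : List Act} (h : noLeaks as) {α β γ : Uid}
    {vli vlj : List Item} (hsub : [Act.msg β α vli, .msg γ β vlj] <+ as) {n : Nonce}
    (hni : (Sum.inl n : Item) ∈ vli) (hnj : (Sum.inl n : Item) ∈ vlj) : γ = α := by
  obtain ⟨i, j, hij, hi, hj⟩ := List.pair_sublist_iff_getElem?.1 hsub
  exact h i j α β γ vli vlj hij hi hj ⟨n, hni, hnj⟩

theorem nonce_returned (as : List Act) (n : Nonce) (α β γ : Uid)
    (j : ℕ) (vlj : List Item)
    (hnl : noLeaks (uHist as β))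
    (hi : ∃ i vli, i < j ∧ as[i]? = some (.msg β α vli) ∧
      (Sum.inl n : Item) ∈ vli ∧
      ∀ k r s vk, k < j → as[k]? = some (.msg r s vk) →
        (Sum.inl n : Item) ∈ vk → k = i)
    (hj : as[j]? = some (.msg γ β vlj))
    (hn : (Sum.inl n : Item) ∈ vlj) :
    γ = α := by
  obtain ⟨i, vli, hij, hgi, hni, -⟩ := hi
  have hsub : [Act.msg β α vli, .msg γ β vlj] <+ as :=
    List.pair_sublist_iff_getElem?.2 ⟨i, j, hij, hgi, hj⟩
  have hsub_uHist : [Act.msg β α vli, .msg γ β vlj] <+ uHist as β := by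
    simpa [uHist, involves] using hsub.filter (involves β)
  exact hnl.eq_of_pair_sublist hsub_uHist hni hn
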